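/- Let I_k(t) = (1/π)∫₀^π e^{t cos ω} cos(kω) dω for k ∈ ℤ and t > 0. Then there exists a constant C > 0 such that Σ_{k∈ℤ} |I_{k+1}(t) − 2I_k(t) + I_{k−1}(t)| ≤ C e^t / t for all t > 0. -/

import Mathlib

open Filter Topology Set intervalIntegral

noncomputable section

/-- The modified Bessel function of the first kind of integer order `k`. -/
def besselI (k : ℤ) (t : ℝ) : ℝ :=
  (1 / Real.pi) * ∫ ω in (0 : ℝ)..Real.pi, Real.exp (t * Real.cos ω) * Real.cos ((k : ℝ) * ω)

/-!
Since `cos ((k + 1) ω) - 2 cos (k ω) + cos ((k - 1) ω) = -2 (1 - cos ω) cos (k ω)`, the second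
difference is `-2/π` times the `k`-th cosine coefficient of `g(ω) = e^{t cos ω} (1 - cos ω)`.
Writing `u = t (1 - cos ω) ≥ 2 t ω² / π²` and `e^{t cos ω} = e^t e^{-u}`, both `g` and its second
derivative are dominated on `[0, π]` by `e^t` times a polynomial in `u` times `e^{-u}`, hence by a
Gaussian of width `π / √t`. This bounds the coefficient by `O(e^t t^{-3/2})` directly, and by
`O(e^t t^{-1/2} k^{-2})` after integrating by parts twice (the boundary terms vanish since
`sin (k π) = 0` and `g'(0) = g'(π) = 0`). Using the first bound for `|k| ≤ √t` and the second for
`|k| > √t` gives `O(e^t / t)`.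
-/

open Real MeasureTheory

theorem sum_range_le_of_le_of_le_div_sq {f : ℕ → ℝ} {A B : ℝ} (hf : ∀ n, 0 ≤ f n)
    (hA : ∀ n, f n ≤ A) (hB : ∀ n, n ≠ 0 → f n ≤ B / (n : ℝ) ^ 2) {K : ℕ} (hK : K ≠ 0)
    (N : ℕ) : ∑ n ∈ Finset.range N, f n ≤ (K + 1) * A + B / K := by
  have hB0 : 0 ≤ B := by simpa using (hf 1).trans (hB 1 one_ne_zero)
  rw [← Finset.sum_filter_add_sum_filter_not (Finset.range N) (· ≤ K)]
  gcongr ?_ + ?_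
  · calc ∑ n ∈ (Finset.range N).filter (· ≤ K), f n
        ≤ ∑ n ∈ Finset.range (K + 1), f n :=
          Finset.sum_le_sum_of_subset_of_nonneg (fun n hn => by simp at hn ⊢; omega)
            fun n _ _ => hf n
      _ ≤ (K + 1) * A := by
          simpa using Finset.sum_le_card_nsmul (Finset.range (K + 1)) f A fun n _ => hA n
  · set M := max K N
    calc ∑ n ∈ (Finset.range N).filter (¬ · ≤ K), f n
        ≤ ∑ n ∈ Finset.Ioc K M, f n :=
          Finset.sum_le_sum_of_subset_of_nonneg (fun n hn => by simp at hn ⊢; omega)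
            fun n _ _ => hf n
      _ ≤ ∑ n ∈ Finset.Ioc K M, B * ((n : ℝ) ^ 2)⁻¹ := Finset.sum_le_sum fun n hn =>
          (hB n (by simp at hn; omega)).trans_eq (div_eq_mul_inv _ _)
      _ ≤ B * ((K : ℝ)⁻¹ - (M : ℝ)⁻¹) := by
          rw [← Finset.mul_sum]
          exact mul_le_mul_of_nonneg_left (sum_Ioc_inv_sq_le_sub hK (le_max_left _ _)) hB0
      _ ≤ B / K := by
          rw [div_eq_mul_inv]
          exact mul_le_mul_of_nonneg_left (sub_le_self _ (by positivity)) hB0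

theorem summable_and_tsum_le_of_le_of_le_div_sq_nat {f : ℕ → ℝ} {A B : ℝ}
    (hf : ∀ n, 0 ≤ f n) (hA : ∀ n, f n ≤ A) (hB : ∀ n, n ≠ 0 → f n ≤ B / (n : ℝ) ^ 2)
    {K : ℕ} (hK : K ≠ 0) : Summable f ∧ ∑' n, f n ≤ (K + 1) * A + B / K :=
  have hsum := sum_range_le_of_le_of_le_div_sq hf hA hB hK
  ⟨summable_of_sum_range_le hf hsum, Real.tsum_le_of_sum_range_le hf hsum⟩

theorem summable_and_tsum_le_of_le_of_le_div_sq {f : ℤ → ℝ} {A B x : ℝ} (hx : 0 < x)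
    (hf : ∀ k, 0 ≤ f k) (hA : ∀ k, f k ≤ A) (hB : ∀ k, k ≠ 0 → f k ≤ B / (k : ℝ) ^ 2) :
    Summable f ∧ ∑' k, f k ≤ (2 * x + 4) * A + 2 * B / x := by
  set K := ⌈x⌉₊
  have hK : K ≠ 0 := (Nat.ceil_pos.2 hx).ne'
  have hxK : x ≤ K := Nat.le_ceil x
  have hKx : (K : ℝ) ≤ x + 1 := (Nat.ceil_lt_add_one hx.le).le
  have hA0 : 0 ≤ A := (hf 0).trans (hA 0)
  have hB0 : 0 ≤ B := by simpa using (hf 1).trans (hB 1 one_ne_zero)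
  obtain ⟨hpos, hpos_le⟩ := summable_and_tsum_le_of_le_of_le_div_sq_nat (f := fun n => f n)
    (fun n => hf n) (fun n => hA n) (fun n hn => by simpa using hB n (by exact_mod_cast hn)) hK
  obtain ⟨hneg, hneg_le⟩ := summable_and_tsum_le_of_le_of_le_div_sq_nat (f := fun n => f (-n))
    (fun n => hf _) (fun n => hA _) (fun n hn => by simpa using hB (-n) (by simpa using hn)) hK
  refine ⟨hpos.of_nat_of_neg hneg, ?_⟩
  have hAK : (K + 1) * A ≤ (x + 2) * A := mul_le_mul_of_nonneg_right (by linarith) hA0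
  have hBK : B / K ≤ B / x := div_le_div_of_nonneg_left hB0 hx hxK
  rw [hpos.tsum_of_nat_of_neg hneg]
  calc (∑' n : ℕ, f n) + (∑' n : ℕ, f (-n)) - f 0
      ≤ 2 * ((K + 1) * A + B / K) := by linarith [hf 0]
    _ ≤ 2 * ((x + 2) * A + B / x) := by linarith
    _ = (2 * x + 4) * A + 2 * B / x := by ring

theorem integral_mul_cos_int_mul_eq_of_deriv_zero {u u' u'' : ℝ → ℝ}
    (hu : ∀ x, HasDerivAt u (u' x) x) (hu' : ∀ x, HasDerivAt u' (u'' x) x)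
    (hu'' : Continuous u'') (h0 : u' 0 = 0) (hπ : u' π = 0) {k : ℤ} (hk : k ≠ 0) :
    ∫ x in 0..π, u x * cos (k * x) = -(∫ x in 0..π, u'' x * cos (k * x)) / (k : ℝ) ^ 2 := by
  have hk : (k : ℝ) ≠ 0 := Int.cast_ne_zero.2 hk
  have hu'c : Continuous u' := continuous_iff_continuousAt.2 fun x => (hu' x).continuousAt
  have hsin x : HasDerivAt (fun x => sin (k * x) / k) (cos (k * x)) x := by
    simpa [hk] using (((hasDerivAt_id x).const_mul (k : ℝ)).sin).div_const (k : ℝ)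
  have hcos x : HasDerivAt (fun x => -cos (k * x) / k) (sin (k * x)) x := by
    simpa [hk] using (((hasDerivAt_id x).const_mul (k : ℝ)).cos).neg.div_const (k : ℝ)
  have first := integral_mul_deriv_eq_deriv_mul (fun x _ => hu x) (fun x _ => hsin x)
    (hu'c.intervalIntegrable 0 π)
    ((by fun_prop : Continuous fun x => cos (k * x)).intervalIntegrable 0 π)
  have second := integral_mul_deriv_eq_deriv_mul (fun x _ => hu' x) (fun x _ => hcos x)
    (hu''.intervalIntegrable 0 π)
    ((by fun_prop : Continuous fun x => sin (k * x)).intervalIntegrable 0 π)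
  simp only [mul_div_assoc', intervalIntegral.integral_div, intervalIntegral.integral_neg,
    mul_neg, mul_zero, zero_mul, sin_zero, sin_int_mul_pi, h0, hπ] at first second
  rw [first, second]
  field_simp
  ring

theorem abs_integral_mul_cos_le {u : ℝ → ℝ} {a b : ℝ} (hab : a ≤ b)
    (hu : IntervalIntegrable u volume a b) (c : ℝ) :
    |∫ x in a..b, u x * cos (c * x)| ≤ ∫ x in a..b, |u x| :=
  norm_integral_le_of_norm_le (f := fun x => u x * cos (c * x)) hab (.of_forall fun x _ => by
    simpa only [Real.norm_eq_abs, abs_mul] using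
      mul_le_of_le_one_right (abs_nonneg (u x)) (abs_cos_le_one (c * x))) hu.abs

theorem integral_exp_neg_mul_sq_le {b c : ℝ} (hb : 0 < b) (hc : 0 ≤ c) :
    ∫ x in 0..c, exp (-b * x ^ 2) ≤ √(π / b) / 2 := by
  rw [integral_of_le hc, ← integral_gaussian_Ioi b]
  exact setIntegral_mono_set (integrable_exp_neg_mul_sq hb).integrableOn
    (.of_forall fun x => (exp_pos _).le) Ioc_subset_Ioi_self.eventuallyLE

theorem integral_exp_neg_mul_sq_le_pi {t : ℝ} (ht : 0 ≤ t) :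
    ∫ ω in 0..π, exp (-(t / π ^ 2) * ω ^ 2) ≤ π := by
  have h := norm_integral_le_of_norm_le_const (a := 0) (b := π) (C := 1)
    (f := fun ω => exp (-(t / π ^ 2) * ω ^ 2)) fun ω _ => by
      rw [norm_of_nonneg (exp_pos _).le, exp_le_one_iff, neg_mul, neg_nonpos]
      positivity
  rw [one_mul, sub_zero, abs_of_pos pi_pos] at h
  exact (le_abs_self _).trans h

theorem sqrt_mul_integral_exp_neg_mul_sq_le_pi {t : ℝ} (ht : 0 < t) :
    √t * ∫ ω in 0..π, exp (-(t / π ^ 2) * ω ^ 2) ≤ π := by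
  have hsqrt : √t * √(π / (t / π ^ 2)) = π * √π := by
    rw [← sqrt_mul ht.le, show t * (π / (t / π ^ 2)) = π ^ 2 * π by field_simp,
      sqrt_mul (sq_nonneg π), sqrt_sq pi_pos.le]
  have hpi : √π ≤ 2 := sqrt_le_iff.2 ⟨by norm_num, by linarith [pi_le_four]⟩
  calc √t * ∫ ω in 0..π, exp (-(t / π ^ 2) * ω ^ 2)
      ≤ √t * (√(π / (t / π ^ 2)) / 2) := by
        gcongr; exact integral_exp_neg_mul_sq_le (by positivity) pi_pos.le
    _ = π * √π / 2 := by rw [← mul_div_assoc, hsqrt]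
    _ ≤ π := by nlinarith [pi_pos]

def besselKernel (t ω : ℝ) : ℝ := exp (t * cos ω) * (1 - cos ω)

def besselKernelDeriv (t ω : ℝ) : ℝ := exp (t * cos ω) * (sin ω * (1 - t * (1 - cos ω)))

def besselKernelDeriv2 (t ω : ℝ) : ℝ :=
  exp (t * cos ω) * ((cos ω - t * sin ω ^ 2) * (1 - t * (1 - cos ω)) - t * sin ω ^ 2)

theorem hasDerivAt_besselKernel (t ω : ℝ) :
    HasDerivAt (besselKernel t) (besselKernelDeriv t ω) ω := by
  have : HasDerivAt (fun ω => exp (t * cos ω) * (1 - cos ω)) _ ω :=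
    ((hasDerivAt_cos ω).const_mul t).exp.mul ((hasDerivAt_cos ω).const_sub 1)
  exact this.congr_deriv (by rw [besselKernelDeriv]; ring)

theorem hasDerivAt_besselKernelDeriv (t ω : ℝ) :
    HasDerivAt (besselKernelDeriv t) (besselKernelDeriv2 t ω) ω := by
  have : HasDerivAt (fun ω => exp (t * cos ω) * (sin ω * (1 - t * (1 - cos ω)))) _ ω :=
    ((hasDerivAt_cos ω).const_mul t).exp.mul
      ((hasDerivAt_sin ω).mul ((((hasDerivAt_cos ω).const_sub 1).const_mul t).const_sub 1))
  exact this.congr_deriv (by rw [besselKernelDeriv2]; ring)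

theorem besselI_sub_two_mul_add_eq (k : ℤ) (t : ℝ) :
    besselI (k + 1) t - 2 * besselI k t + besselI (k - 1) t =
      -(2 / π) * ∫ ω in 0..π, besselKernel t ω * cos (k * ω) := by
  have hint (m : ℝ) : IntervalIntegrable (fun ω => exp (t * cos ω) * cos (m * ω)) volume 0 π :=
    (by fun_prop : Continuous _).intervalIntegrable 0 π
  have hpt (ω : ℝ) : exp (t * cos ω) * cos ((k + 1) * ω) - 2 * (exp (t * cos ω) * cos (k * ω))
      + exp (t * cos ω) * cos ((k - 1) * ω) = -2 * (besselKernel t ω * cos (k * ω)) := by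
    rw [add_mul, sub_mul, one_mul, cos_add, cos_sub, besselKernel]
    ring
  simp only [besselI, Int.cast_add, Int.cast_sub, Int.cast_one]
  calc _ = 1 / π * ∫ ω in 0..π, exp (t * cos ω) * cos ((k + 1) * ω)
        - 2 * (exp (t * cos ω) * cos (k * ω)) + exp (t * cos ω) * cos ((k - 1) * ω) := by
        rw [integral_add ((hint _).sub ((hint _).const_mul 2)) (hint _),
          integral_sub (hint _) ((hint _).const_mul 2), intervalIntegral.integral_const_mul]
        ring
    _ = _ := by
        simp only [hpt, intervalIntegral.integral_const_mul]
        ring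

theorem one_add_sq_mul_exp_neg_le {u : ℝ} (hu : 0 ≤ u) :
    (1 + u) ^ 2 * exp (-u) ≤ 8 * exp (-(u / 2)) := by
  have hquad := quadratic_le_exp_of_nonneg (by positivity : 0 ≤ u / 2)
  have hsplit : exp (-u) = exp (-(u / 2)) * exp (-(u / 2)) := by rw [← exp_add]; ring_nf
  have hinv : exp (u / 2) * exp (-(u / 2)) = 1 := by rw [← exp_add]; simp
  rw [hsplit]
  -- `(1 + u) ^ 2 ≤ 8 * (1 + u / 2 + (u / 2) ^ 2 / 2) ≤ 8 * exp (u / 2)`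
  nlinarith [exp_pos (-(u / 2))]

theorem exp_neg_half_mul_one_sub_cos_le {t ω : ℝ} (ht : 0 ≤ t) (hω : |ω| ≤ π) :
    exp (-(t * (1 - cos ω) / 2)) ≤ exp (-(t / π ^ 2) * ω ^ 2) := by
  have hcos := cos_le_one_sub_mul_cos_sq hω
  have key : t / π ^ 2 * ω ^ 2 ≤ t * (1 - cos ω) / 2 := by
    have : 2 / π ^ 2 * ω ^ 2 ≤ 1 - cos ω := by linarith
    calc t / π ^ 2 * ω ^ 2 = t * (2 / π ^ 2 * ω ^ 2) / 2 := by ring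
      _ ≤ t * (1 - cos ω) / 2 := by gcongr
  rw [exp_le_exp]
  linarith

theorem one_add_sq_mul_exp_mul_cos_le {t ω : ℝ} (ht : 0 ≤ t) (hω : |ω| ≤ π) :
    (1 + t * (1 - cos ω)) ^ 2 * exp (t * cos ω) ≤ 8 * exp t * exp (-(t / π ^ 2) * ω ^ 2) := by
  have hu : 0 ≤ t * (1 - cos ω) := mul_nonneg ht (by linarith [cos_le_one ω])
  calc (1 + t * (1 - cos ω)) ^ 2 * exp (t * cos ω)
      = exp t * ((1 + t * (1 - cos ω)) ^ 2 * exp (-(t * (1 - cos ω)))) := by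
        rw [mul_left_comm, ← exp_add]; ring_nf
    _ ≤ exp t * (8 * exp (-(t * (1 - cos ω) / 2))) :=
        mul_le_mul_of_nonneg_left (one_add_sq_mul_exp_neg_le hu) (exp_pos t).le
    _ ≤ exp t * (8 * exp (-(t / π ^ 2) * ω ^ 2)) := by
        gcongr ?_ * (8 * ?_)
        exact exp_neg_half_mul_one_sub_cos_le ht hω
    _ = 8 * exp t * exp (-(t / π ^ 2) * ω ^ 2) := by ring

theorem abs_besselKernel_le {t ω : ℝ} (ht : 0 < t) (hω : |ω| ≤ π) :
    |besselKernel t ω| ≤ 8 * exp t * exp (-(t / π ^ 2) * ω ^ 2) / t := by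
  have hc : 0 ≤ 1 - cos ω := by linarith [cos_le_one ω]
  have hu : 0 ≤ t * (1 - cos ω) := mul_nonneg ht.le hc
  rw [besselKernel, abs_of_nonneg (by positivity), le_div_iff₀ ht]
  calc exp (t * cos ω) * (1 - cos ω) * t = t * (1 - cos ω) * exp (t * cos ω) := by ring
    _ ≤ (1 + t * (1 - cos ω)) ^ 2 * exp (t * cos ω) := by gcongr; nlinarith
    _ ≤ 8 * exp t * exp (-(t / π ^ 2) * ω ^ 2) := one_add_sq_mul_exp_mul_cos_le ht.le hω

theorem abs_besselKernelDeriv2_le {t ω : ℝ} (ht : 0 ≤ t) (hω : |ω| ≤ π) :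
    |besselKernelDeriv2 t ω| ≤ 24 * exp t * exp (-(t / π ^ 2) * ω ^ 2) := by
  set u := t * (1 - cos ω)
  have hu : 0 ≤ u := mul_nonneg ht (by linarith [cos_le_one ω])
  -- `sin ω ^ 2 = (1 - cos ω) * (1 + cos ω) ≤ 2 * (1 - cos ω)`
  have hsin : t * sin ω ^ 2 ≤ 2 * u := by
    have : sin ω ^ 2 ≤ 2 * (1 - cos ω) := by nlinarith [sin_sq ω, neg_one_le_cos ω]
    nlinarith
  have hpoly : |(cos ω - t * sin ω ^ 2) * (1 - u) - t * sin ω ^ 2| ≤ 3 * (1 + u) ^ 2 := by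
    have ha : 0 ≤ t * sin ω ^ 2 := by positivity
    -- the expression is `cos ω * (1 - u) - t * sin ω ^ 2 * (2 - u)`
    rw [abs_le]
    constructor <;> nlinarith [cos_le_one ω, neg_one_le_cos ω, mul_nonneg ha hu,
      mul_nonneg (sub_nonneg.2 hsin) hu, mul_nonneg (sub_nonneg.2 (cos_le_one ω)) hu,
      mul_nonneg (neg_le_iff_add_nonneg.1 (neg_one_le_cos ω)) hu]
  rw [besselKernelDeriv2, abs_mul, abs_of_pos (exp_pos _)]
  calc exp (t * cos ω) * |(cos ω - t * sin ω ^ 2) * (1 - u) - t * sin ω ^ 2|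
      ≤ exp (t * cos ω) * (3 * (1 + u) ^ 2) := by gcongr
    _ = 3 * ((1 + u) ^ 2 * exp (t * cos ω)) := by ring
    _ ≤ 3 * (8 * exp t * exp (-(t / π ^ 2) * ω ^ 2)) := by
        gcongr 3 * ?_; exact one_add_sq_mul_exp_mul_cos_le ht hω
    _ = 24 * exp t * exp (-(t / π ^ 2) * ω ^ 2) := by ring

theorem continuous_besselKernel (t : ℝ) : Continuous (besselKernel t) := by
  unfold besselKernel; fun_prop

theorem continuous_besselKernelDeriv2 (t : ℝ) : Continuous (besselKernelDeriv2 t) := by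
  unfold besselKernelDeriv2; fun_prop

theorem integral_abs_besselKernel_le {t : ℝ} (ht : 0 < t) :
    ∫ ω in 0..π, |besselKernel t ω| ≤
      8 * exp t * (∫ ω in 0..π, exp (-(t / π ^ 2) * ω ^ 2)) / t := by
  rw [← intervalIntegral.integral_const_mul, ← intervalIntegral.integral_div]
  refine integral_mono_on pi_pos.le ((continuous_besselKernel t).abs.intervalIntegrable 0 π)
    ((by fun_prop : Continuous _).intervalIntegrable 0 π) fun ω hω => ?_
  exact abs_besselKernel_le ht (abs_le.2 ⟨by linarith [hω.1, pi_pos], hω.2⟩)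

theorem integral_abs_besselKernelDeriv2_le {t : ℝ} (ht : 0 ≤ t) :
    ∫ ω in 0..π, |besselKernelDeriv2 t ω| ≤
      24 * exp t * ∫ ω in 0..π, exp (-(t / π ^ 2) * ω ^ 2) := by
  rw [← intervalIntegral.integral_const_mul]
  refine integral_mono_on pi_pos.le ((continuous_besselKernelDeriv2 t).abs.intervalIntegrable 0 π)
    ((by fun_prop : Continuous _).intervalIntegrable 0 π) fun ω hω => ?_
  exact abs_besselKernelDeriv2_le ht (abs_le.2 ⟨by linarith [hω.1, pi_pos], hω.2⟩)

theorem abs_besselI_sub_two_mul_add_le (k : ℤ) (t : ℝ) :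
    |besselI (k + 1) t - 2 * besselI k t + besselI (k - 1) t| ≤
      2 / π * ∫ ω in 0..π, |besselKernel t ω| := by
  rw [besselI_sub_two_mul_add_eq, abs_mul, abs_neg, abs_of_pos (by positivity)]
  gcongr
  exact abs_integral_mul_cos_le pi_pos.le ((continuous_besselKernel t).intervalIntegrable 0 π) k

theorem abs_besselI_sub_two_mul_add_le_div_sq {k : ℤ} (hk : k ≠ 0) (t : ℝ) :
    |besselI (k + 1) t - 2 * besselI k t + besselI (k - 1) t| ≤
      2 / π * (∫ ω in 0..π, |besselKernelDeriv2 t ω|) / (k : ℝ) ^ 2 := by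
  rw [besselI_sub_two_mul_add_eq, integral_mul_cos_int_mul_eq_of_deriv_zero
    (hasDerivAt_besselKernel t) (hasDerivAt_besselKernelDeriv t) (continuous_besselKernelDeriv2 t)
    (by simp [besselKernelDeriv]) (by simp [besselKernelDeriv]) hk, abs_mul, abs_neg,
    abs_of_pos (by positivity), abs_div, abs_neg,
    abs_of_pos (by positivity : (0 : ℝ) < (k : ℝ) ^ 2), mul_div_assoc]
  gcongr
  exact abs_integral_mul_cos_le pi_pos.le
    ((continuous_besselKernelDeriv2 t).intervalIntegrable 0 π) k

theorem besselI_second_difference_series :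
    ∃ C : ℝ, 0 < C ∧ ∀ t : ℝ, 0 < t →
      Summable (fun k : ℤ => |besselI (k + 1) t - 2 * besselI k t + besselI (k - 1) t|) ∧
      (∑' k : ℤ, |besselI (k + 1) t - 2 * besselI k t + besselI (k - 1) t|) ≤
        C * Real.exp t / t := by
  refine ⟨192, by norm_num, fun t ht => ?_⟩
  set G := ∫ ω in 0..π, exp (-(t / π ^ 2) * ω ^ 2)
  have hs : 0 < √t := sqrt_pos.2 ht
  have hst : √t * √t = t := mul_self_sqrt ht.le
  have hG : G ≤ π := integral_exp_neg_mul_sq_le_pi ht.le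
  have hsG : √t * G ≤ π := sqrt_mul_integral_exp_neg_mul_sq_le_pi ht
  obtain ⟨hsum, hle⟩ := summable_and_tsum_le_of_le_of_le_div_sq hs (fun _ => abs_nonneg _)
    (abs_besselI_sub_two_mul_add_le · t) (fun _ hk => abs_besselI_sub_two_mul_add_le_div_sq hk t)
  refine ⟨hsum, hle.trans ?_⟩
  calc (2 * √t + 4) * (2 / π * ∫ ω in 0..π, |besselKernel t ω|)
        + 2 * (2 / π * ∫ ω in 0..π, |besselKernelDeriv2 t ω|) / √t
      ≤ (2 * √t + 4) * (2 / π * (8 * exp t * G / t)) + 2 * (2 / π * (24 * exp t * G)) / √t := by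
        gcongr
        · exact integral_abs_besselKernel_le ht
        · exact integral_abs_besselKernelDeriv2_le ht.le
    _ = (128 * (√t * G) + 64 * G) * exp t / (π * t) := by
        field_simp
        linear_combination (-96 * G) * hst
    _ ≤ (128 * π + 64 * π) * exp t / (π * t) := by gcongr
    _ = 192 * exp t / t := by field_simp; ring
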